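/- Let f(x; m, σ) denote the density of a normal distribution N(m, σ²) truncated to [0,1], i.e., f(x;m,σ) = (1/σ)·φ((x−m)/σ)/(Φ((1−m)/σ) − Φ((0−m)/σ)) for x ∈ [0,1]. Then for any u and any 0 ≤ x < y ≤ 1, the total variation distance between the truncated normal distributions with means x+u and y+u (same σ) satisfies ‖N̄(y+u,σ²) − N̄(x+u,σ²)‖_TV ≤ (√2/(σ√π))·(y−x). -/

import Mathlib

open MeasureTheory

/-- Standard normal pdf. -/
noncomputable def stdNormalPdf (t : ℝ) : ℝ :=
  (Real.sqrt (2 * Real.pi))⁻¹ * Real.exp (-t ^ 2 / 2)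

/-- Standard normal cdf. -/
noncomputable def stdNormalCdf (t : ℝ) : ℝ :=
  ∫ s in Set.Iic t, stdNormalPdf s

/-- Density of `N(m, σ²)` truncated to `[0,1]`. -/
noncomputable def truncNormalPdf (x m σ : ℝ) : ℝ :=
  (1 / σ) * stdNormalPdf ((x - m) / σ) /
    (stdNormalCdf ((1 - m) / σ) - stdNormalCdf ((0 - m) / σ))

/-!
Two normal densities with the same `σ`, truncated to `[0, 1]`, have a likelihood ratio that is
exponential in `t`, so they cross once and their `L¹` distance is at most twice the largest gap
between their distribution functions. In standard coordinates the distribution function of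
`N̄(m, σ²)` at `T` is that of a standard normal `X` conditioned on an interval `[a, b]`, evaluated
at `s`, with `a`, `b`, `s` all shifted by `-m / σ`. Its derivative in the shift is
`Cov(1{X > s}, X)`, which is largest at `s = E X`, where it equals `E (X - E X)⁺`. On one side of
`E X` the conditioned law has a thinner tail than `N(E X, 1)`, whence `E (X - E X)⁺ ≤ φ 0`, the
mean excess of `N(E X, 1)`. So the gap is at most `φ 0 (q - p) / σ`, and `2 φ 0 = √2 / √π`.
-/

open MeasureTheory Real Set Filter Topology ProbabilityTheory

lemma stdNormalPdf_eq_gaussianPDFReal : stdNormalPdf = gaussianPDFReal 0 1 := by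
  ext t
  simp [stdNormalPdf, gaussianPDFReal]

lemma stdNormalPdf_pos (t : ℝ) : 0 < stdNormalPdf t := by
  unfold stdNormalPdf
  positivity

lemma stdNormalPdf_neg (t : ℝ) : stdNormalPdf (-t) = stdNormalPdf t := by
  simp [stdNormalPdf]

lemma stdNormalPdf_sub (t c : ℝ) :
    stdNormalPdf (t - c) = stdNormalPdf t * exp (c * t - c ^ 2 / 2) := by
  unfold stdNormalPdf
  rw [mul_assoc, ← exp_add]
  ring_nf

@[fun_prop]
lemma continuous_stdNormalPdf : Continuous stdNormalPdf := by
  unfold stdNormalPdf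
  fun_prop

lemma integrable_stdNormalPdf : Integrable stdNormalPdf :=
  stdNormalPdf_eq_gaussianPDFReal ▸ integrable_gaussianPDFReal 0 1

lemma integral_stdNormalPdf : ∫ t, stdNormalPdf t = 1 := by
  rw [stdNormalPdf_eq_gaussianPDFReal]
  exact integral_gaussianPDFReal_eq_one 0 one_ne_zero

lemma integrable_mul_stdNormalPdf : Integrable fun t => t * stdNormalPdf t := by
  refine ((integrable_mul_exp_neg_mul_sq (by norm_num : (0 : ℝ) < 1 / 2)).const_mul
    (√(2 * π))⁻¹).congr (.of_forall fun t => ?_)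
  unfold stdNormalPdf
  ring_nf

lemma hasDerivAt_stdNormalPdf (t : ℝ) :
    HasDerivAt stdNormalPdf (-t * stdNormalPdf t) t := by
  have h : HasDerivAt (fun s : ℝ => -s ^ 2 / 2) (-t) t :=
    ((hasDerivAt_pow 2 t).neg.div_const 2).congr_deriv (by push_cast; ring)
  exact (h.exp.const_mul _).congr_deriv (by unfold stdNormalPdf; ring)

lemma tendsto_stdNormalPdf_atTop : Tendsto stdNormalPdf atTop (𝓝 0) := by
  have h : Tendsto (fun t : ℝ => -t ^ 2 / 2) atTop atBot :=
    (tendsto_neg_atTop_atBot.comp (tendsto_pow_atTop two_ne_zero)).atBot_div_const two_pos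
  show Tendsto (fun t => (√(2 * π))⁻¹ * exp (-t ^ 2 / 2)) atTop (𝓝 0)
  simpa only [mul_zero, Function.comp_apply] using
    (tendsto_exp_atBot.comp h).const_mul (√(2 * π))⁻¹

lemma stdNormalCdf_sub (a b : ℝ) :
    stdNormalCdf b - stdNormalCdf a = ∫ t in a..b, stdNormalPdf t :=
  intervalIntegral.integral_Iic_sub_Iic integrable_stdNormalPdf.integrableOn
    integrable_stdNormalPdf.integrableOn

lemma one_sub_stdNormalCdf (t : ℝ) : 1 - stdNormalCdf t = ∫ x in Ioi t, stdNormalPdf x := by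
  rw [← integral_stdNormalPdf, ← intervalIntegral.integral_Iic_add_Ioi (b := t)
    integrable_stdNormalPdf.integrableOn integrable_stdNormalPdf.integrableOn, stdNormalCdf]
  ring

lemma stdNormalCdf_neg (t : ℝ) : stdNormalCdf (-t) = 1 - stdNormalCdf t := by
  calc stdNormalCdf (-t) = ∫ x in Iic (-t), stdNormalPdf (-x) := by
        simp only [stdNormalPdf_neg]; rfl
    _ = 1 - stdNormalCdf t := by rw [integral_comp_neg_Iic, neg_neg, one_sub_stdNormalCdf]

lemma hasDerivAt_stdNormalCdf (t : ℝ) : HasDerivAt stdNormalCdf (stdNormalPdf t) t := by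
  have h : stdNormalCdf = fun s => stdNormalCdf 0 + ∫ r in (0 : ℝ)..s, stdNormalPdf r := by
    funext s
    rw [← stdNormalCdf_sub]
    ring
  rw [h]
  exact (intervalIntegral.integral_hasDerivAt_right
    (integrable_stdNormalPdf.intervalIntegrable)
    (continuous_stdNormalPdf.stronglyMeasurableAtFilter _ _)
    continuous_stdNormalPdf.continuousAt).const_add _

@[fun_prop]
lemma continuous_stdNormalCdf : Continuous stdNormalCdf :=
  continuous_iff_continuousAt.2 fun t => (hasDerivAt_stdNormalCdf t).continuousAt

lemma stdNormalCdf_strictMono : StrictMono stdNormalCdf := by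
  intro a b hab
  have := intervalIntegral.intervalIntegral_pos_of_pos
    integrable_stdNormalPdf.intervalIntegrable stdNormalPdf_pos hab
  linarith [stdNormalCdf_sub a b]

lemma stdNormalCdf_pos (t : ℝ) : 0 < stdNormalCdf t :=
  (setIntegral_nonneg measurableSet_Iic fun x _ => (stdNormalPdf_pos x).le).trans_lt
    (stdNormalCdf_strictMono (sub_one_lt t))

lemma stdNormalCdf_lt_one (t : ℝ) : stdNormalCdf t < 1 := by
  linarith [stdNormalCdf_pos (-t), stdNormalCdf_neg t]

lemma integral_mul_stdNormalPdf (a b : ℝ) :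
    ∫ t in a..b, t * stdNormalPdf t = stdNormalPdf a - stdNormalPdf b := by
  rw [intervalIntegral.integral_eq_sub_of_hasDerivAt (f := fun t => -stdNormalPdf t)
    (fun t _ => (hasDerivAt_stdNormalPdf t).neg.congr_deriv (by ring))
    integrable_mul_stdNormalPdf.intervalIntegrable]
  ring

lemma integral_stdNormalCdf (a b : ℝ) :
    ∫ t in a..b, stdNormalCdf t = (b * stdNormalCdf b + stdNormalPdf b) -
      (a * stdNormalCdf a + stdNormalPdf a) := by
  refine intervalIntegral.integral_eq_sub_of_hasDerivAt
    (f := fun t => t * stdNormalCdf t + stdNormalPdf t) (fun t _ => ?_)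
    (continuous_stdNormalCdf.intervalIntegrable a b)
  exact (((hasDerivAt_id' t).mul (hasDerivAt_stdNormalCdf t)).add
    (hasDerivAt_stdNormalPdf t)).congr_deriv (by ring)

lemma mul_one_sub_stdNormalCdf_le (u : ℝ) : u * (1 - stdNormalCdf u) ≤ stdNormalPdf u := by
  have hIoi : ∫ x in Ioi u, x * stdNormalPdf x = stdNormalPdf u := by
    simpa using integral_Ioi_of_hasDerivAt_of_tendsto' (f := fun t => -stdNormalPdf t)
      (fun x _ => (hasDerivAt_stdNormalPdf x).neg.congr_deriv (by ring))
      integrable_mul_stdNormalPdf.integrableOn tendsto_stdNormalPdf_atTop.neg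
  calc u * (1 - stdNormalCdf u) = ∫ x in Ioi u, u * stdNormalPdf x := by
        rw [one_sub_stdNormalCdf, integral_const_mul]
    _ ≤ ∫ x in Ioi u, x * stdNormalPdf x :=
        setIntegral_mono_on (integrable_stdNormalPdf.integrableOn.const_mul u)
          integrable_mul_stdNormalPdf.integrableOn measurableSet_Ioi
          fun x hx => mul_le_mul_of_nonneg_right (le_of_lt hx) (stdNormalPdf_pos x).le
    _ = stdNormalPdf u := hIoi

noncomputable def stdNormalCondMean (a b : ℝ) : ℝ :=
  (stdNormalPdf a - stdNormalPdf b) / (stdNormalCdf b - stdNormalCdf a)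

lemma stdNormalCondMean_mul {a b : ℝ} (hab : a < b) :
    stdNormalCondMean a b * (stdNormalCdf b - stdNormalCdf a) =
      stdNormalPdf a - stdNormalPdf b :=
  div_mul_cancel₀ _ (sub_pos.2 (stdNormalCdf_strictMono hab)).ne'

lemma stdNormalCondMean_mem_Icc {a b : ℝ} (hab : a < b) : stdNormalCondMean a b ∈ Icc a b := by
  have hZ := sub_pos.2 (stdNormalCdf_strictMono hab)
  have hφ : IntervalIntegrable stdNormalPdf volume a b :=
    integrable_stdNormalPdf.intervalIntegrable
  have hxφ : IntervalIntegrable (fun t => t * stdNormalPdf t) volume a b :=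
    integrable_mul_stdNormalPdf.intervalIntegrable
  constructor
  · rw [stdNormalCondMean, le_div_iff₀ hZ, stdNormalCdf_sub, ← integral_mul_stdNormalPdf,
      ← intervalIntegral.integral_const_mul]
    exact intervalIntegral.integral_mono_on hab.le (hφ.const_mul a) hxφ
      fun x hx => mul_le_mul_of_nonneg_right hx.1 (stdNormalPdf_pos x).le
  · rw [stdNormalCondMean, div_le_iff₀ hZ, stdNormalCdf_sub, ← integral_mul_stdNormalPdf,
      ← intervalIntegral.integral_const_mul]
    exact intervalIntegral.integral_mono_on hab.le hxφ (hφ.const_mul b)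
      fun x hx => mul_le_mul_of_nonneg_right hx.2 (stdNormalPdf_pos x).le

/-- The left side is `∫ x in c..b, (x - c) φ x = ∫ t in c..b, (Φ b - Φ t)`; the hypothesis
bounds the integrand by `Z` times the upper tail of `N(c, 1)`, whose mean excess over `c` is
`φ 0`. -/
lemma excess_le_of_tail_le {b c Z : ℝ} (hcb : c ≤ b) (hZ : 0 ≤ Z)
    (htail : ∀ t ∈ Icc c b,
      stdNormalCdf b - stdNormalCdf t ≤ Z * (1 - stdNormalCdf (t - c))) :
    stdNormalPdf c - stdNormalPdf b - c * (stdNormalCdf b - stdNormalCdf c) ≤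
      stdNormalPdf 0 * Z := by
  have hΦ : IntervalIntegrable stdNormalCdf volume c b :=
    continuous_stdNormalCdf.intervalIntegrable c b
  have hΦc : IntervalIntegrable (fun t => stdNormalCdf (t - c)) volume c b :=
    (continuous_stdNormalCdf.comp (continuous_sub_right c)).intervalIntegrable c b
  have hle : ∫ t in c..b, (stdNormalCdf b - stdNormalCdf t) ≤
      ∫ t in c..b, Z * (1 - stdNormalCdf (t - c)) :=
    intervalIntegral.integral_mono_on hcb (intervalIntegrable_const.sub hΦ)
      ((intervalIntegrable_const.sub hΦc).const_mul Z) htail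
  have hlhs : ∫ t in c..b, (stdNormalCdf b - stdNormalCdf t) =
      stdNormalPdf c - stdNormalPdf b - c * (stdNormalCdf b - stdNormalCdf c) := by
    rw [intervalIntegral.integral_sub intervalIntegrable_const hΦ,
      intervalIntegral.integral_const, integral_stdNormalCdf, smul_eq_mul]
    ring
  have hrhs : ∫ t in c..b, Z * (1 - stdNormalCdf (t - c)) =
      Z * ((b - c) * (1 - stdNormalCdf (b - c)) - stdNormalPdf (b - c) + stdNormalPdf 0) := by
    rw [intervalIntegral.integral_const_mul,
      intervalIntegral.integral_sub intervalIntegrable_const hΦc, intervalIntegral.integral_const,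
      intervalIntegral.integral_comp_sub_right (fun t => stdNormalCdf t), integral_stdNormalCdf,
      smul_eq_mul, sub_self]
    ring
  have hmills := mul_one_sub_stdNormalCdf_le (b - c)
  rw [hlhs, hrhs] at hle
  exact hle.trans ((mul_le_mul_of_nonneg_left (by linarith) hZ).trans_eq (mul_comm _ _))

lemma not_down_up_down {W W' : ℝ → ℝ} (hW : ∀ t, HasDerivAt W (W' t) t)
    (hW' : OrdConnected {t | W' t ≤ 0}) {a s t b : ℝ} (has : a < s) (hst : s < t) (htb : t < b)
    (hdown₁ : W s < W a) (hup : W s < W t) (hdown₂ : W b < W t) : False := by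
  have hcont : Continuous W := continuous_iff_continuousAt.2 fun x => (hW x).continuousAt
  have hmvt {x y : ℝ} (hxy : x < y) : ∃ z ∈ Ioo x y, W' z = (W y - W x) / (y - x) :=
    exists_hasDerivAt_eq_slope W W' hxy hcont.continuousOn fun z _ => hW z
  obtain ⟨ζ, hζ, hWζ⟩ := hmvt has
  obtain ⟨ξ, hξ, hWξ⟩ := hmvt hst
  obtain ⟨η, hη, hWη⟩ := hmvt htb
  have hζ' : W' ζ ≤ 0 := hWζ ▸ (div_neg_of_neg_of_pos (by linarith) (by linarith)).le
  have hη' : W' η ≤ 0 := hWη ▸ (div_neg_of_neg_of_pos (by linarith) (by linarith)).le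
  have hξ' : W' ξ ≤ 0 :=
    hW'.out hζ' hη' ⟨by linarith [hζ.2, hξ.1], by linarith [hξ.2, hη.1]⟩
  have : 0 < W' ξ := hWξ ▸ div_pos (by linarith) (by linarith)
  linarith

lemma ordConnected_setOf_mul_stdNormalPdf_sub_sub_nonpos (Z c : ℝ) :
    OrdConnected {t | Z * stdNormalPdf (t - c) - stdNormalPdf t ≤ 0} := by
  have hiff : ∀ t, Z * stdNormalPdf (t - c) - stdNormalPdf t ≤ 0 ↔
      Z * exp (c * t - c ^ 2 / 2) ≤ 1 := fun t => by
    rw [stdNormalPdf_sub, sub_nonpos, mul_left_comm, mul_le_iff_le_one_right (stdNormalPdf_pos t)]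
  refine ⟨fun x hx z hz y hy => ?_⟩
  simp only [mem_ofPred_eq, hiff] at hx hz ⊢
  rcases lt_or_ge Z 0 with hZ | hZ
  · exact (mul_neg_of_neg_of_pos hZ (exp_pos _)).le.trans zero_le_one
  have hcy : c * y ≤ max (c * x) (c * z) := by
    rcases le_total 0 c with h | h
    · exact le_max_of_le_right (mul_le_mul_of_nonneg_left hy.2 h)
    · exact le_max_of_le_left (mul_le_mul_of_nonpos_left hy.1 h)
  rcases max_cases (c * x) (c * z) with ⟨hm, -⟩ | ⟨hm, -⟩ <;> rw [hm] at hcy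
  · exact le_trans (by gcongr) hx
  · exact le_trans (by gcongr) hz

lemma excess_condMean_le {a b c : ℝ} (hab : a < b) (hc : stdNormalCondMean a b = c) :
    stdNormalPdf c - stdNormalPdf b - c * (stdNormalCdf b - stdNormalCdf c) ≤
      stdNormalPdf 0 * (stdNormalCdf b - stdNormalCdf a) := by
  obtain ⟨hac, hcb⟩ := hc ▸ stdNormalCondMean_mem_Icc hab
  have hmean := hc ▸ stdNormalCondMean_mul hab
  set Z := stdNormalCdf b - stdNormalCdf a
  have hZ : 0 < Z := sub_pos.2 (stdNormalCdf_strictMono hab)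
  -- `Z Φ(· - c) - Φ + Φ a` compares the law of `X + c`, `X` standard normal, with `Z` times the
  -- conditioned law; its derivative changes sign only once since `φ(t - c) / φ t` is monotone.
  set W : ℝ → ℝ := fun t => Z * stdNormalCdf (t - c) - stdNormalCdf t + stdNormalCdf a
  have hW : ∀ t, HasDerivAt W (Z * stdNormalPdf (t - c) - stdNormalPdf t) t := fun t =>
    ((((hasDerivAt_stdNormalCdf (t - c)).comp_sub_const t c).const_mul Z).sub
      (hasDerivAt_stdNormalCdf t)).add_const _
  have hW' := ordConnected_setOf_mul_stdNormalPdf_sub_sub_nonpos Z c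
  have hWa : 0 < W a := by
    simpa [W] using mul_pos hZ (stdNormalCdf_pos (a - c))
  have hWb : W b < 0 := by
    have := mul_pos hZ (sub_pos.2 (stdNormalCdf_lt_one (b - c)))
    simp only [W, Z] at this ⊢
    linarith
  have hcases : (∀ t ∈ Icc c b, W t ≤ 0) ∨ ∀ t ∈ Icc a c, 0 ≤ W t := by
    by_contra! ⟨⟨t, ht, hWt⟩, s, hs, hWs⟩
    have has : a < s := lt_of_le_of_ne hs.1 (by rintro rfl; linarith)
    have hst : s < t := lt_of_le_of_ne (hs.2.trans ht.1) (by rintro rfl; linarith)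
    have htb : t < b := lt_of_le_of_ne ht.2 (by rintro rfl; linarith)
    exact not_down_up_down hW hW' has hst htb (by linarith) (by linarith) (by linarith)
  rcases hcases with hupper | hlower
  · refine excess_le_of_tail_le hcb hZ.le fun t ht => ?_
    have := hupper t ht
    simp only [W] at this
    linarith
  -- The lower-tail case is the upper-tail case for the reflected interval `[-b, -a]`.
  · have := excess_le_of_tail_le (b := -a) (c := -c) (Z := Z) (by linarith) hZ.le fun t ht => by
      have := hlower (-t) ⟨by linarith [ht.2], by linarith [ht.1]⟩
      have hrefl := stdNormalCdf_neg (t - -c)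
      rw [show -(t - -c) = -t - c by ring] at hrefl
      simp only [W] at this
      rw [hrefl] at this
      linarith [stdNormalCdf_neg a, stdNormalCdf_neg t]
    rw [stdNormalPdf_neg, stdNormalPdf_neg, stdNormalCdf_neg, stdNormalCdf_neg] at this
    linarith

/-- `(Φ b - Φ a)² Cov(1{X > s}, X)` for `X` standard normal conditioned on `[a, b]`. -/
noncomputable def stdNormalTailCov (a b s : ℝ) : ℝ :=
  (stdNormalCdf b - stdNormalCdf s) * (stdNormalPdf s - stdNormalPdf a) +
    (stdNormalCdf s - stdNormalCdf a) * (stdNormalPdf s - stdNormalPdf b)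

section TailCov

variable {a b : ℝ}

lemma hasDerivAt_stdNormalTailCov (hab : a < b) (s : ℝ) :
    HasDerivAt (stdNormalTailCov a b)
      (stdNormalPdf s * (stdNormalCdf b - stdNormalCdf a) * (stdNormalCondMean a b - s)) s := by
  have h := (((hasDerivAt_const s (stdNormalCdf b)).sub (hasDerivAt_stdNormalCdf s)).mul
    ((hasDerivAt_stdNormalPdf s).sub_const (stdNormalPdf a))).add
    (((hasDerivAt_stdNormalCdf s).sub_const (stdNormalCdf a)).mul
      ((hasDerivAt_stdNormalPdf s).sub_const (stdNormalPdf b)))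
  refine h.congr_deriv ?_
  simp only [Pi.sub_apply]
  linear_combination -stdNormalPdf s * stdNormalCondMean_mul hab

lemma stdNormalTailCov_monotoneOn (hab : a < b) :
    MonotoneOn (stdNormalTailCov a b) (Icc a (stdNormalCondMean a b)) := by
  refine monotoneOn_of_hasDerivWithinAt_nonneg (convex_Icc _ _)
    (fun s _ => (hasDerivAt_stdNormalTailCov hab s).continuousAt.continuousWithinAt)
    (fun s _ => (hasDerivAt_stdNormalTailCov hab s).hasDerivWithinAt) fun s hs => ?_
  rw [interior_Icc] at hs
  have hZ := sub_pos.2 (stdNormalCdf_strictMono hab)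
  exact mul_nonneg (mul_nonneg (stdNormalPdf_pos s).le hZ.le) (by linarith [hs.2])

lemma stdNormalTailCov_antitoneOn (hab : a < b) :
    AntitoneOn (stdNormalTailCov a b) (Icc (stdNormalCondMean a b) b) := by
  refine antitoneOn_of_hasDerivWithinAt_nonpos (convex_Icc _ _)
    (fun s _ => (hasDerivAt_stdNormalTailCov hab s).continuousAt.continuousWithinAt)
    (fun s _ => (hasDerivAt_stdNormalTailCov hab s).hasDerivWithinAt) fun s hs => ?_
  rw [interior_Icc] at hs
  have hZ := sub_pos.2 (stdNormalCdf_strictMono hab)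
  exact mul_nonpos_of_nonneg_of_nonpos (mul_nonneg (stdNormalPdf_pos s).le hZ.le)
    (by linarith [hs.1])

lemma stdNormalTailCov_condMean_le (hab : a < b) :
    stdNormalTailCov a b (stdNormalCondMean a b) ≤
      stdNormalPdf 0 * (stdNormalCdf b - stdNormalCdf a) ^ 2 := by
  set c := stdNormalCondMean a b
  have hZ := sub_pos.2 (stdNormalCdf_strictMono hab)
  have hexcess := excess_condMean_le hab rfl
  calc stdNormalTailCov a b c = (stdNormalCdf b - stdNormalCdf a) *
        (stdNormalPdf c - stdNormalPdf b - c * (stdNormalCdf b - stdNormalCdf c)) := by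
        unfold stdNormalTailCov
        linear_combination (stdNormalCdf b - stdNormalCdf c) * stdNormalCondMean_mul hab
    _ ≤ (stdNormalCdf b - stdNormalCdf a) *
          (stdNormalPdf 0 * (stdNormalCdf b - stdNormalCdf a)) :=
        mul_le_mul_of_nonneg_left hexcess hZ.le
    _ = stdNormalPdf 0 * (stdNormalCdf b - stdNormalCdf a) ^ 2 := by ring

lemma stdNormalTailCov_mem_Icc (hab : a < b) {s : ℝ} (hs : s ∈ Icc a b) :
    stdNormalTailCov a b s ∈ Icc 0 (stdNormalPdf 0 * (stdNormalCdf b - stdNormalCdf a) ^ 2) := by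
  obtain ⟨hac, hcb⟩ := stdNormalCondMean_mem_Icc hab
  have hmax := stdNormalTailCov_condMean_le hab
  have hleft : stdNormalTailCov a b a = 0 := by simp [stdNormalTailCov]
  have hright : stdNormalTailCov a b b = 0 := by simp [stdNormalTailCov]
  rcases le_total s (stdNormalCondMean a b) with hsc | hcs
  · have hmono := stdNormalTailCov_monotoneOn hab
    exact ⟨hleft ▸ hmono ⟨le_rfl, hac⟩ ⟨hs.1, hsc⟩ hs.1,
      (hmono ⟨hs.1, hsc⟩ ⟨hac, le_rfl⟩ hsc).trans hmax⟩
  · have hanti := stdNormalTailCov_antitoneOn hab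
    exact ⟨hright ▸ hanti ⟨hcs, hs.2⟩ ⟨hcb, le_rfl⟩ hs.2,
      (hanti ⟨le_rfl, hcb⟩ ⟨hcs, hs.2⟩ hcs).trans hmax⟩

end TailCov

noncomputable def stdNormalCondCdf (a b s : ℝ) : ℝ :=
  (stdNormalCdf s - stdNormalCdf a) / (stdNormalCdf b - stdNormalCdf a)

section CondCdf

variable {a b s : ℝ}

lemma hasDerivAt_stdNormalCondCdf_add (hab : a < b) (θ : ℝ) :
    HasDerivAt (fun θ => stdNormalCondCdf (a + θ) (b + θ) (s + θ))
      (stdNormalTailCov (a + θ) (b + θ) (s + θ) /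
        (stdNormalCdf (b + θ) - stdNormalCdf (a + θ)) ^ 2) θ := by
  have hΦ : ∀ r, HasDerivAt (fun θ => stdNormalCdf (r + θ)) (stdNormalPdf (r + θ)) θ :=
    fun r => (hasDerivAt_stdNormalCdf (r + θ)).comp_const_add r θ
  have hZ := (sub_pos.2 (stdNormalCdf_strictMono (add_lt_add_left hab θ))).ne'
  refine (((hΦ s).sub (hΦ a)).div ((hΦ b).sub (hΦ a)) hZ).congr_deriv ?_
  simp only [Pi.sub_apply, stdNormalTailCov]
  ring

lemma abs_stdNormalCondCdf_add_sub_le (hab : a < b) (hs : s ∈ Icc a b) (θ₁ θ₂ : ℝ) :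
    |stdNormalCondCdf (a + θ₁) (b + θ₁) (s + θ₁) -
        stdNormalCondCdf (a + θ₂) (b + θ₂) (s + θ₂)| ≤
      stdNormalPdf 0 * |θ₁ - θ₂| := by
  have hbound : ∀ θ, ‖stdNormalTailCov (a + θ) (b + θ) (s + θ) /
      (stdNormalCdf (b + θ) - stdNormalCdf (a + θ)) ^ 2‖ ≤ stdNormalPdf 0 := fun θ => by
    obtain ⟨h0, h1⟩ := stdNormalTailCov_mem_Icc (add_lt_add_left hab θ)
      ⟨add_le_add_left hs.1 θ, add_le_add_left hs.2 θ⟩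
    have hZ := pow_pos (sub_pos.2 (stdNormalCdf_strictMono (add_lt_add_left hab θ))) 2
    rw [Real.norm_eq_abs, abs_of_nonneg (div_nonneg h0 hZ.le), div_le_iff₀ hZ]
    exact h1
  simpa only [Real.norm_eq_abs] using convex_univ.norm_image_sub_le_of_norm_hasDerivWithin_le
    (fun θ _ => (hasDerivAt_stdNormalCondCdf_add hab θ).hasDerivWithinAt) (fun θ _ => hbound θ)
    (mem_univ θ₂) (mem_univ θ₁)

end CondCdf

@[fun_prop]
lemma continuous_truncNormalPdf (m σ : ℝ) : Continuous fun t => truncNormalPdf t m σ := by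
  unfold truncNormalPdf
  fun_prop

section TruncNormal

variable {σ : ℝ}

lemma integral_truncNormalPdf (hσ : 0 < σ) (m T : ℝ) :
    ∫ t in (0 : ℝ)..T, truncNormalPdf t m σ =
      stdNormalCondCdf ((0 - m) / σ) ((1 - m) / σ) ((T - m) / σ) := by
  have hφ : ∫ t in (0 : ℝ)..T, stdNormalPdf ((t - m) / σ) =
      σ * (stdNormalCdf ((T - m) / σ) - stdNormalCdf ((0 - m) / σ)) := by
    rw [intervalIntegral.integral_comp_sub_right (fun x => stdNormalPdf (x / σ)),
      intervalIntegral.integral_comp_div _ hσ.ne', stdNormalCdf_sub, smul_eq_mul]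
  simp only [truncNormalPdf, stdNormalCondCdf]
  rw [intervalIntegral.integral_div, intervalIntegral.integral_const_mul, hφ]
  field_simp

lemma integral_truncNormalPdf_zero_one (hσ : 0 < σ) (m : ℝ) :
    ∫ t in (0 : ℝ)..1, truncNormalPdf t m σ = 1 := by
  rw [integral_truncNormalPdf hσ]
  refine div_self (sub_pos.2 (stdNormalCdf_strictMono ?_)).ne'
  gcongr
  norm_num

lemma abs_integral_truncNormalPdf_sub_le (hσ : 0 < σ) {T : ℝ} (hT : T ∈ Icc (0 : ℝ) 1)
    (p q : ℝ) :
    |∫ t in (0 : ℝ)..T, (truncNormalPdf t q σ - truncNormalPdf t p σ)| ≤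
      stdNormalPdf 0 / σ * |q - p| := by
  have hshift : ∀ r m, r / σ + -m / σ = (r - m) / σ := fun r m => by ring
  have h := abs_stdNormalCondCdf_add_sub_le (a := 0 / σ) (b := 1 / σ) (s := T / σ)
    (by gcongr; norm_num) ⟨by gcongr; exact hT.1, by gcongr; exact hT.2⟩ (-q / σ) (-p / σ)
  simp only [hshift] at h
  rw [intervalIntegral.integral_sub ((continuous_truncNormalPdf q σ).intervalIntegrable _ _)
    ((continuous_truncNormalPdf p σ).intervalIntegrable _ _), integral_truncNormalPdf hσ,
    integral_truncNormalPdf hσ]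
  calc _ ≤ stdNormalPdf 0 * |-q / σ - -p / σ| := h
    _ = stdNormalPdf 0 / σ * |q - p| := by
      rw [show -q / σ - -p / σ = -((q - p) / σ) by ring, abs_neg, abs_div, abs_of_pos hσ]
      ring

lemma exists_truncNormalPdf_crossing (hσ : 0 < σ) {p q : ℝ} (hpq : p < q) :
    ∃ T, ∀ t, (t ≤ T → truncNormalPdf t q σ ≤ truncNormalPdf t p σ) ∧
      (T ≤ t → truncNormalPdf t p σ ≤ truncNormalPdf t q σ) := by
  set δ := (q - p) / σ
  have hδ : 0 < δ := div_pos (sub_pos.2 hpq) hσ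
  have hZ : ∀ m, 0 < stdNormalCdf ((1 - m) / σ) - stdNormalCdf ((0 - m) / σ) := fun m =>
    sub_pos.2 (stdNormalCdf_strictMono (by gcongr; norm_num))
  set K := (stdNormalCdf ((1 - p) / σ) - stdNormalCdf ((0 - p) / σ)) /
    (stdNormalCdf ((1 - q) / σ) - stdNormalCdf ((0 - q) / σ))
  have hK : 0 < K := div_pos (hZ p) (hZ q)
  set r : ℝ → ℝ := fun t => K * exp (δ * ((t - p) / σ) - δ ^ 2 / 2)
  have hratio : ∀ t, truncNormalPdf t q σ = truncNormalPdf t p σ * r t := fun t => by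
    have : (t - q) / σ = (t - p) / σ - δ := by ring
    simp only [truncNormalPdf, r, K, this, stdNormalPdf_sub]
    field_simp [(hZ p).ne', (hZ q).ne']
    rw [mul_div_mul_right _ _ (hZ p).ne']
  have hr : Monotone r := fun s t hst => by
    simp only [r]
    gcongr
  have hpos : ∀ t, 0 ≤ truncNormalPdf t p σ := fun t => by
    have := stdNormalPdf_pos ((t - p) / σ)
    have := hZ p
    unfold truncNormalPdf
    positivity
  set T := p + σ * (δ / 2 - log K / δ)
  have hrT : r T = 1 := by
    have : δ * ((T - p) / σ) - δ ^ 2 / 2 = -log K := by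
      simp only [T]
      field_simp
      ring
    simp only [r, this, exp_neg, exp_log hK]
    exact mul_inv_cancel₀ hK.ne'
  refine ⟨T, fun t => ⟨fun ht => ?_, fun ht => ?_⟩⟩
  · rw [hratio]
    exact mul_le_of_le_one_right (hpos t) (hrT ▸ hr ht)
  · rw [hratio]
    exact le_mul_of_one_le_right (hpos t) (hrT ▸ hr ht)

end TruncNormal

lemma integral_abs_le_of_sign_change {h : ℝ → ℝ} {a b T M : ℝ} (hab : a ≤ b)
    (hint : IntervalIntegrable h volume a b) (hzero : ∫ t in a..b, h t = 0)
    (hneg : ∀ t ∈ Icc a b, t ≤ T → h t ≤ 0)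
    (hpos : ∀ t ∈ Icc a b, T ≤ t → 0 ≤ h t)
    (hM : ∀ S ∈ Icc a b, |∫ t in a..S, h t| ≤ M) :
    ∫ t in a..b, |h t| ≤ 2 * M := by
  have hM0 : 0 ≤ M := by simpa using hM a ⟨le_rfl, hab⟩
  rcases le_or_gt T a with hTa | haT
  · rw [intervalIntegral.integral_congr fun t ht => abs_of_nonneg
      (hpos t (uIcc_of_le hab ▸ ht) (hTa.trans (uIcc_of_le hab ▸ ht).1)), hzero]
    linarith
  rcases le_or_gt b T with hbT | hTb
  · rw [intervalIntegral.integral_congr fun t ht => abs_of_nonpos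
      (hneg t (uIcc_of_le hab ▸ ht) ((uIcc_of_le hab ▸ ht).2.trans hbT)),
      intervalIntegral.integral_neg, hzero]
    linarith
  have hTmem : T ∈ uIcc a b := uIcc_of_le hab ▸ ⟨haT.le, hTb.le⟩
  have hleft := hint.mono_set (uIcc_subset_uIcc_left hTmem)
  have hright := hint.mono_set (uIcc_subset_uIcc_right hTmem)
  have hsplit := intervalIntegral.integral_add_adjacent_intervals hleft hright
  have habs_left : ∫ t in a..T, |h t| = -∫ t in a..T, h t := by
    rw [← intervalIntegral.integral_neg]
    refine intervalIntegral.integral_congr fun t ht => abs_of_nonpos ?_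
    rw [uIcc_of_le haT.le] at ht
    exact hneg t ⟨ht.1, ht.2.trans hTb.le⟩ ht.2
  have habs_right : ∫ t in T..b, |h t| = ∫ t in T..b, h t := by
    refine intervalIntegral.integral_congr fun t ht => abs_of_nonneg ?_
    rw [uIcc_of_le hTb.le] at ht
    exact hpos t ⟨haT.le.trans ht.1, ht.2⟩ ht.1
  rw [← intervalIntegral.integral_add_adjacent_intervals hleft.abs hright.abs, habs_left,
    habs_right]
  have := neg_le_abs (∫ t in a..T, h t)
  linarith [hM T ⟨haT.le, hTb.le⟩, hsplit]

lemma two_mul_stdNormalPdf_zero : 2 * stdNormalPdf 0 = √2 / √π := by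
  have h2 : √2 * √2 = 2 := mul_self_sqrt zero_le_two
  have hπ : 0 < √π := sqrt_pos.2 pi_pos
  have h0 : stdNormalPdf 0 = (√2 * √π)⁻¹ := by simp [stdNormalPdf, sqrt_mul zero_le_two]
  rw [h0]
  field_simp
  linear_combination -h2

theorem truncated_normal_tv_lipschitz_general (σ u x y : ℝ) (hσ : 0 < σ)
    (hxy : x < y) :
    (∫ t in (0:ℝ)..1, |truncNormalPdf t (y + u) σ - truncNormalPdf t (x + u) σ|) ≤
      (Real.sqrt 2 / (σ * Real.sqrt Real.pi)) * (y - x) := by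
  obtain ⟨T, hT⟩ := exists_truncNormalPdf_crossing hσ (by linarith : x + u < y + u)
  have hint : ∀ m, IntervalIntegrable (fun t => truncNormalPdf t m σ) volume 0 1 := fun m =>
    (continuous_truncNormalPdf m σ).intervalIntegrable 0 1
  have hzero : ∫ t in (0 : ℝ)..1, (truncNormalPdf t (y + u) σ - truncNormalPdf t (x + u) σ) = 0 := by
    rw [intervalIntegral.integral_sub (hint _) (hint _), integral_truncNormalPdf_zero_one hσ,
      integral_truncNormalPdf_zero_one hσ, sub_self]
  have hL1 := integral_abs_le_of_sign_change zero_le_one ((hint _).sub (hint _)) hzero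
    (fun t _ ht => sub_nonpos.2 ((hT t).1 ht)) (fun t _ ht => sub_nonneg.2 ((hT t).2 ht))
    (fun S hS => abs_integral_truncNormalPdf_sub_le hσ hS (x + u) (y + u))
  calc _ ≤ 2 * (stdNormalPdf 0 / σ * |y + u - (x + u)|) := hL1
    _ = √2 / (σ * √π) * (y - x) := by
      rw [add_sub_add_right_eq_sub, abs_of_pos (sub_pos.2 hxy), div_mul_eq_div_div_swap,
        ← two_mul_stdNormalPdf_zero]
      ring

/-- For the normal laws truncated to `[0,1]`, the total variation distance
(the `L¹` distance of the densities on `[0,1]`) between means `y+u` and `x+u`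
is at most `(√2/(σ√π))·(y−x)` for `0 ≤ x < y ≤ 1`. -/
theorem truncated_normal_tv_lipschitz (σ u x y : ℝ) (hσ : 0 < σ)
    (hx : 0 ≤ x) (hxy : x < y) (hy : y ≤ 1) :
    (∫ t in (0:ℝ)..1, |truncNormalPdf t (y + u) σ - truncNormalPdf t (x + u) σ|) ≤
      (Real.sqrt 2 / (σ * Real.sqrt Real.pi)) * (y - x) :=
  truncated_normal_tv_lipschitz_general σ u x y hσ hxy
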